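/- arXiv:1808.09404 — 6 statements merged into one kernel-verified Lean document; each statement's English description precedes it below -/
import Mathlib

section
/- Let ν be a weight satisfying property (U), i.e. there exist α > 0 and C_ν > 0 such that for every f ∈ H^∞_ν and every z ∈ 𝔻, |f'(z)| ≤ C_ν ‖f‖_{H^∞_ν} / (ν(z)(1−|z|²)). Let μ be any weight. If sup_{0≤t<1} sup_{0≤θ<2π} μ(t) ∫₀ᵗ |g(r e^{iθ})| / ((1−r²) ν(r)) dr < ∞, then the operator S_g f(z) = ∫₀ᶻ f'(ω) g(ω) dω is bounded from H^∞_ν to H^∞_μ. -/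
open Complex Metric Set Filter Real MeasureTheory intervalIntegral

noncomputable section

def IsWeight (ν : ℂ → ℝ) : Prop :=
  ContinuousOn ν (Metric.ball (0:ℂ) 1) ∧
  (∀ z ∈ Metric.ball (0:ℂ) 1, 0 ≤ ν z) ∧
  (∀ z : ℂ, ν z = ν ((‖z‖ : ℝ) : ℂ)) ∧
  (∀ r s : ℝ, 0 ≤ r → r ≤ s → s < 1 → ν ((s:ℝ) : ℂ) ≤ ν ((r:ℝ) : ℂ))

/-- The companion Volterra operator `S_g f (z) = ∫₀ᶻ f'(ω) g(ω) dω`. -/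
def Sg (g f : ℂ → ℂ) (z : ℂ) : ℂ :=
  z * ∫ t in (0:ℝ)..1, deriv f ((t:ℂ) * z) * g ((t:ℂ) * z)

/-! Write `z = s e^{iθ}`. Along the ray, `S_g f z = e^{iθ} ∫₀ˢ f'(r e^{iθ}) g(r e^{iθ}) dr`, and
property (U) bounds `|f'(r e^{iθ})|` by `Cν ‖f‖ / ((1 - r²) ν(r))`. Hence
`μ(z) |S_g f z| ≤ Cν ‖f‖ μ(s) ∫₀ˢ |g(r e^{iθ})| / ((1 - r²) ν(r)) dr ≤ Cν N ‖f‖`. -/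

namespace IsWeight

variable {ν : ℂ → ℝ}

lemma nonneg (hν : IsWeight ν) {z : ℂ} (hz : z ∈ ball (0 : ℂ) 1) : 0 ≤ ν z := hν.2.1 z hz

lemma apply_eq_norm (hν : IsWeight ν) (z : ℂ) : ν z = ν (‖z‖ : ℂ) := hν.2.2.1 z

lemma le_apply_zero (hν : IsWeight ν) {z : ℂ} (hz : z ∈ ball (0 : ℂ) 1) : ν z ≤ ν 0 := by
  rw [hν.apply_eq_norm z, ← ofReal_zero]
  exact hν.2.2.2 0 ‖z‖ le_rfl (norm_nonneg z) (mem_ball_zero_iff.mp hz)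

end IsWeight

lemma ofReal_mul_exp_mem_ball {r : ℝ} (hr0 : 0 ≤ r) (hr1 : r < 1) (θ : ℝ) :
    (r : ℂ) * exp (θ * I) ∈ ball (0 : ℂ) 1 := by
  rwa [mem_ball_zero_iff, norm_mul, norm_exp_ofReal_mul_I, mul_one, norm_real,
    Real.norm_of_nonneg hr0]

lemma exists_mem_Ico_norm_mul_exp_eq (z : ℂ) :
    ∃ θ ∈ Ico 0 (2 * π), (‖z‖ : ℂ) * exp (θ * I) = z := by
  refine ⟨toIcoMod two_pi_pos 0 (arg z), toIcoMod_mem_Ico' two_pi_pos _, ?_⟩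
  rw [← self_sub_toIcoDiv_zsmul, ofReal_sub, ofReal_zsmul, ofReal_mul, ofReal_ofNat,
    exp_mul_I_periodic.sub_zsmul_eq, norm_mul_exp_arg_mul_I]

lemma Sg_ofReal_mul_exp (g f : ℂ → ℂ) (s θ : ℝ) :
    Sg g f (s * exp (θ * I)) =
      exp (θ * I) * ∫ r in (0:ℝ)..s, deriv f (r * exp (θ * I)) * g (r * exp (θ * I)) := by
  rcases eq_or_ne s 0 with rfl | hs
  · simp [Sg]
  have hsub := integral_comp_mul_right
    (fun r : ℝ => deriv f (r * exp (θ * I)) * g (r * exp (θ * I))) hs (a := 0) (b := 1)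
  simp only [zero_mul, one_mul, ofReal_mul, mul_assoc] at hsub
  rw [Sg, hsub, Complex.real_smul, ofReal_inv, mul_comm (s : ℂ), mul_assoc,
    mul_inv_cancel_left₀ (ofReal_ne_zero.mpr hs)]

def HasPropertyU (ν : ℂ → ℝ) (Cν : ℝ) : Prop :=
  ∀ f : ℂ → ℂ, DifferentiableOn ℂ f (ball (0:ℂ) 1) →
    ∀ C : ℝ, (∀ z ∈ ball (0:ℂ) 1, ν z * ‖f z‖ ≤ C) →
    ∀ z ∈ ball (0:ℂ) 1, ‖deriv f z‖ ≤ Cν * C / (ν z * (1 - ‖z‖ ^ 2))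

section PropertyU

variable {ν : ℂ → ℝ} {Cν : ℝ}

/-- Test (U) on the identity: at a zero of `ν` its right-hand side is `x / 0 = 0`,
while `id' = 1`. -/
lemma IsWeight.pos_of_hasPropertyU (hν : IsWeight ν) (hU : HasPropertyU ν Cν) {z : ℂ}
    (hz : z ∈ ball (0 : ℂ) 1) : 0 < ν z := by
  refine (hν.nonneg hz).lt_of_ne fun hνz => ?_
  have hbound : ∀ w ∈ ball (0 : ℂ) 1, ν w * ‖id w‖ ≤ ν 0 := fun w hw =>
    calc ν w * ‖w‖ ≤ ν 0 * 1 :=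
          mul_le_mul (hν.le_apply_zero hw) (mem_ball_zero_iff.mp hw).le (norm_nonneg w)
            (hν.nonneg (mem_ball_self one_pos))
      _ = ν 0 := mul_one _
  have h := hU id differentiableOn_id (ν 0) hbound z hz
  rw [deriv_id, ← hνz, zero_mul, div_zero] at h
  norm_num at h

lemma IsWeight.continuousOn_ray_quotient (hν : IsWeight ν) (hpos : ∀ z ∈ ball (0 : ℂ) 1, 0 < ν z)
    {g : ℂ → ℂ} (hg : ContinuousOn g (ball (0 : ℂ) 1)) (θ : ℝ) {s : ℝ} (hs : s < 1) :
    ContinuousOn (fun r : ℝ => ‖g (r * exp (θ * I))‖ / ((1 - r ^ 2) * ν r)) (Icc 0 s) := by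
  have hray : MapsTo (fun r : ℝ => (r : ℂ) * exp (θ * I)) (Icc 0 s) (ball 0 1) :=
    fun r hr => ofReal_mul_exp_mem_ball hr.1 (hr.2.trans_lt hs) θ
  have hreal : MapsTo (fun r : ℝ => (r : ℂ)) (Icc 0 s) (ball 0 1) := fun r hr => by
    simpa using ofReal_mul_exp_mem_ball hr.1 (hr.2.trans_lt hs) 0
  refine (hg.comp (by fun_prop) hray).norm.div
    ((by fun_prop : Continuous fun r : ℝ => 1 - r ^ 2).continuousOn.mul
      (hν.1.comp continuous_ofReal.continuousOn hreal)) fun r hr => ?_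
  have hr1 : r < 1 := hr.2.trans_lt hs
  exact mul_ne_zero (by nlinarith [hr.1]) (hpos _ (hreal hr)).ne'

lemma norm_Sg_ofReal_mul_exp_le (hν : IsWeight ν) (hU : HasPropertyU ν Cν) {g f : ℂ → ℂ}
    (hg : ContinuousOn g (ball (0 : ℂ) 1)) (hf : DifferentiableOn ℂ f (ball (0 : ℂ) 1)) {C : ℝ}
    (hC : ∀ z ∈ ball (0 : ℂ) 1, ν z * ‖f z‖ ≤ C) {s : ℝ} (hs0 : 0 ≤ s) (hs1 : s < 1) (θ : ℝ) :
    ‖Sg g f (s * exp (θ * I))‖ ≤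
      Cν * C * ∫ r in (0:ℝ)..s, ‖g (r * exp (θ * I))‖ / ((1 - r ^ 2) * ν r) := by
  rw [Sg_ofReal_mul_exp, norm_mul, norm_exp_ofReal_mul_I, one_mul,
    ← intervalIntegral.integral_const_mul]
  refine norm_integral_le_of_norm_le hs0 (ae_of_all _ fun r hr => ?_)
    (((hν.continuousOn_ray_quotient (fun z hz => hν.pos_of_hasPropertyU hU hz)
      hg θ hs1).intervalIntegrable_of_Icc hs0).const_mul _)
  have hr0 : 0 ≤ r := hr.1.le
  have hmem := ofReal_mul_exp_mem_ball hr0 (hr.2.trans_lt hs1) θ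
  have hnorm : ‖(r : ℂ) * exp (θ * I)‖ = r := by
    rw [norm_mul, norm_exp_ofReal_mul_I, mul_one, norm_real, Real.norm_of_nonneg hr0]
  have hderiv := hU f hf C hC _ hmem
  rw [hν.apply_eq_norm, hnorm] at hderiv
  calc ‖deriv f (r * exp (θ * I)) * g (r * exp (θ * I))‖
      ≤ Cν * C / (ν r * (1 - r ^ 2)) * ‖g (r * exp (θ * I))‖ := by
        rw [norm_mul]; exact mul_le_mul_of_nonneg_right hderiv (norm_nonneg _)
    _ = Cν * C * (‖g (r * exp (θ * I))‖ / ((1 - r ^ 2) * ν r)) := by ring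

end PropertyU

theorem stmt3 (ν μ : ℂ → ℝ) (g : ℂ → ℂ)
    (hν : IsWeight ν) (hμ : IsWeight μ)
    (hg : DifferentiableOn ℂ g (Metric.ball (0:ℂ) 1))
    -- property (U): the derivative estimate for functions in `H^∞_ν`
    (hU : ∃ Cν : ℝ, 0 < Cν ∧ ∀ f : ℂ → ℂ, DifferentiableOn ℂ f (Metric.ball (0:ℂ) 1) →
      ∀ C : ℝ, (∀ z ∈ Metric.ball (0:ℂ) 1, ν z * ‖f z‖ ≤ C) →
      ∀ z ∈ Metric.ball (0:ℂ) 1,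
        ‖deriv f z‖ ≤ Cν * C / (ν z * (1 - ‖z‖ ^ 2)))
    (hint : ∃ N : ℝ, ∀ t ∈ Set.Ico (0:ℝ) 1, ∀ θ ∈ Set.Ico (0:ℝ) (2*Real.pi),
      μ ((t:ℝ) : ℂ) * ∫ r in (0:ℝ)..t,
        ‖g ((r:ℂ) * Complex.exp ((θ:ℂ) * Complex.I))‖ / ((1 - r^2) * ν ((r:ℝ) : ℂ)) ≤ N) :
    ∃ M : ℝ, ∀ f : ℂ → ℂ, DifferentiableOn ℂ f (Metric.ball (0:ℂ) 1) →
      ∀ C : ℝ, (∀ z ∈ Metric.ball (0:ℂ) 1, ν z * ‖f z‖ ≤ C) →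
      ∀ z ∈ Metric.ball (0:ℂ) 1, μ z * ‖Sg g f z‖ ≤ M * C := by
  obtain ⟨Cν, hCν, hU⟩ := hU
  obtain ⟨N, hN⟩ := hint
  refine ⟨Cν * N, fun f hf C hC z hz => ?_⟩
  have hC0 : 0 ≤ C := (mul_nonneg (hν.nonneg (mem_ball_self one_pos)) (norm_nonneg _)).trans
    (hC 0 (mem_ball_self one_pos))
  have hs1 : ‖z‖ < 1 := mem_ball_zero_iff.mp hz
  obtain ⟨θ, hθ, hpolar⟩ := exists_mem_Ico_norm_mul_exp_eq z
  have hray := norm_Sg_ofReal_mul_exp_le hν hU hg.continuousOn hf hC (norm_nonneg z) hs1 θ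
  rw [hpolar] at hray
  calc μ z * ‖Sg g f z‖
      ≤ μ ‖z‖ * (Cν * C * ∫ r in (0:ℝ)..‖z‖, ‖g (r * exp (θ * I))‖ / ((1 - r ^ 2) * ν r)) := by
        rw [hμ.apply_eq_norm]; exact mul_le_mul_of_nonneg_left hray (hμ.nonneg (by simpa))
    _ = Cν * C * (μ ‖z‖ * ∫ r in (0:ℝ)..‖z‖, ‖g (r * exp (θ * I))‖ / ((1 - r ^ 2) * ν r)) := by
        ring
    _ ≤ Cν * C * N := mul_le_mul_of_nonneg_left (hN _ ⟨norm_nonneg z, hs1⟩ θ hθ) (by positivity)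
    _ = Cν * N * C := by ring
end
end

section
/- Let ν be an analytic weight, i.e. ν(z) = 1/f_ν(|z|) for some analytic function f_ν on 𝔻 satisfying |f_ν(z)| ≤ f_ν(|z|) for all z ∈ 𝔻. Then ν equals its associated weight: ν̃ = ν, where ν̃(z) = 1 / sup{|f(z)| : f analytic, sup_w ν(w)|f(w)| ≤ 1}. -/
open Complex Metric Set Filter Real MeasureTheory

noncomputable section

def assocWeight (ν : ℂ → ℝ) (z : ℂ) : ℝ :=
  (sSup {a : ℝ | ∃ f : ℂ → ℂ, DifferentiableOn ℂ f (Metric.ball (0:ℂ) 1) ∧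
      (∀ w ∈ Metric.ball (0:ℂ) 1, ν w * ‖f w‖ ≤ 1) ∧ a = ‖f z‖})⁻¹

theorem exists_norm_eq_one_mul_eq_norm (z : ℂ) : ∃ c : ℂ, ‖c‖ = 1 ∧ c * z = ‖z‖ := by
  refine ⟨exp (-(arg z : ℂ) * I), by simpa using norm_exp_ofReal_mul_I (-arg z), ?_⟩
  calc exp (-(arg z : ℂ) * I) * z = exp (-(arg z : ℂ) * I) * (‖z‖ * exp (arg z * I)) := by
        rw [norm_mul_exp_arg_mul_I]
    _ = ‖z‖ := by
        rw [mul_left_comm, ← Complex.exp_add, neg_mul, neg_add_cancel, Complex.exp_zero, mul_one]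

theorem assocWeight_eq_of_norm_eq_inv {ν : ℂ → ℝ} {z : ℂ} (hνz : 0 < ν z) {f : ℂ → ℂ}
    (hf : DifferentiableOn ℂ f (ball 0 1)) (hfν : ∀ w ∈ ball (0:ℂ) 1, ν w * ‖f w‖ ≤ 1)
    (hfz : ‖f z‖ = (ν z)⁻¹) (hz : z ∈ ball (0:ℂ) 1) : assocWeight ν z = ν z := by
  unfold assocWeight
  suffices IsGreatest {a : ℝ | ∃ f : ℂ → ℂ, DifferentiableOn ℂ f (ball (0:ℂ) 1) ∧
      (∀ w ∈ ball (0:ℂ) 1, ν w * ‖f w‖ ≤ 1) ∧ a = ‖f z‖} (ν z)⁻¹ by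
    rw [this.csSup_eq, inv_inv]
  refine ⟨⟨f, hf, hfν, hfz.symm⟩, ?_⟩
  rintro _ ⟨g, -, hg, rfl⟩
  rw [← one_div, le_div_iff₀' hνz]
  exact hg z hz

theorem stmt5_general (ν : ℂ → ℝ) (fν : ℂ → ℂ)
    (hfν : DifferentiableOn ℂ fν (Metric.ball (0:ℂ) 1))
    (hpos : ∀ z ∈ Metric.ball (0:ℂ) 1, 0 < (fν ((‖z‖ : ℝ) : ℂ)).re)
    (hbound : ∀ z ∈ Metric.ball (0:ℂ) 1,
      ‖fν z‖ ≤ (fν ((‖z‖ : ℝ) : ℂ)).re)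
    (hνdef : ∀ z ∈ Metric.ball (0:ℂ) 1, ν z = ((fν ((‖z‖ : ℝ) : ℂ)).re)⁻¹) :
    ∀ z ∈ Metric.ball (0:ℂ) 1, assocWeight ν z = ν z := by
  intro z hz
  -- the extremal function is `fν` rotated so that `z` lands on the positive radius `‖z‖`
  obtain ⟨c, hc, hcz⟩ := exists_norm_eq_one_mul_eq_norm z
  have hmaps : MapsTo (c * ·) (ball (0:ℂ) 1) (ball 0 1) := fun w hw => by simpa [hc] using hw
  have hrot : ∀ w ∈ ball (0:ℂ) 1, ‖fν (c * w)‖ ≤ (fν ‖w‖).re := fun w hw => by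
    simpa [hc] using hbound _ (hmaps hw)
  refine assocWeight_eq_of_norm_eq_inv (f := fun w => fν (c * w)) ?_
    (hfν.comp (by fun_prop) hmaps) (fun w hw => ?_) ?_ hz
  · rw [hνdef z hz]
    exact inv_pos.2 (hpos z hz)
  · rw [hνdef w hw]
    exact inv_mul_le_one_of_le₀ (hrot w hw) (hpos w hw).le
  · -- `‖fν ‖z‖‖ ≤ (fν ‖z‖).re` forces `fν ‖z‖` to be real
    rw [hνdef z hz, inv_inv, hcz]
    exact le_antisymm (hcz ▸ hrot z hz) (re_le_norm _)

/-- An analytic weight equals its associated weight: if `ν(z) = 1/f_ν(|z|)` for an analytic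
`f_ν` with `|f_ν(z)| ≤ f_ν(|z|)` (the latter real and positive), then `ν̃ = ν` on `𝔻`. -/
theorem stmt5 (ν : ℂ → ℝ) (fν : ℂ → ℂ)
    (hν : IsWeight ν)
    (hfν : DifferentiableOn ℂ fν (Metric.ball (0:ℂ) 1))
    (hreal : ∀ z ∈ Metric.ball (0:ℂ) 1, (fν ((‖z‖ : ℝ) : ℂ)).im = 0)
    (hpos : ∀ z ∈ Metric.ball (0:ℂ) 1, 0 < (fν ((‖z‖ : ℝ) : ℂ)).re)
    (hbound : ∀ z ∈ Metric.ball (0:ℂ) 1,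
      ‖fν z‖ ≤ (fν ((‖z‖ : ℝ) : ℂ)).re)
    (hνdef : ∀ z ∈ Metric.ball (0:ℂ) 1, ν z = ((fν ((‖z‖ : ℝ) : ℂ)).re)⁻¹) :
    ∀ z ∈ Metric.ball (0:ℂ) 1, assocWeight ν z = ν z :=
  stmt5_general ν fν hfν hpos hbound hνdef
end
end

section
/- Let ν and μ be weights with ν strictly positive on [0,1). Suppose that for every ε > 0 there exist t₂ < 1 and t₁ ∈ (t₂, 1) such that sup_{0≤θ<2π} μ(t) ∫_{t₂}^{t} |g'(r e^{iθ})|/ν(r) dr < ε whenever t₁ < t < 1, i.e. lim_{t₂→1⁻} limsup_{t₁→1⁻} sup_θ μ(t₁) ∫_{t₂}^{t₁} |g'(re^{iθ})|/ν(r) dr = 0, and suppose additionally μ is bounded. Then T_g : H^∞_ν → H^∞_μ is compact: for every sequence (f_n) bounded in H^∞_ν with f_n → 0 uniformly on compact subsets of 𝔻, one has ‖T_g f_n‖_{H^∞_μ} → 0. -/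
open Complex Metric Set Filter Real MeasureTheory intervalIntegral

noncomputable section

def Tg (g f : ℂ → ℂ) (z : ℂ) : ℂ :=
  z * ∫ t in (0:ℝ)..1, f ((t:ℂ) * z) * deriv g ((t:ℂ) * z)

/-!
Write `z = s e^{iθ}`, so that `T_g f (z) = e^{iθ} ∫₀ˢ f(r e^{iθ}) g'(r e^{iθ}) dr`. On a closed
disc of radius `t₁ < 1` the derivative `g'` is bounded and `f_n → 0` uniformly, so the part of
the integral over `[0, t₂]` (all of it when `s ≤ t₁`) is small uniformly in `z`, and `μ` is
bounded. On `[t₂, s]` the growth bound `|f_n(r e^{iθ})| ≤ W / ν(r)` turns `μ(s)` times this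
part into `W` times the quantity that the vanishing hypothesis makes small.
-/

lemma TendstoUniformlyOn.eventually_norm_mul_le {ι α E : Type*} [TopologicalSpace α]
    [SeminormedRing E] {l : Filter ι} {f : ι → α → E} {G : α → E} {K : Set α}
    (hf : TendstoUniformlyOn f 0 l K) (hK : IsCompact K) (hG : ContinuousOn G K)
    {η : ℝ} (hη : 0 < η) :
    ∀ᶠ n in l, ∀ w ∈ K, ‖f n w * G w‖ ≤ η := by
  obtain ⟨M, hM⟩ := hK.exists_bound_of_continuousOn hG
  have hM' : ∀ w ∈ K, ‖G w‖ ≤ max M 0 := fun w hw => (hM w hw).trans (le_max_left _ _)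
  have hδ : 0 < η / (max M 0 + 1) := by positivity
  filter_upwards [Metric.tendstoUniformlyOn_iff.1 hf _ hδ] with n hn w hw
  have hfw : ‖f n w‖ ≤ η / (max M 0 + 1) := by simpa using (hn w hw).le
  calc ‖f n w * G w‖ ≤ ‖f n w‖ * ‖G w‖ := norm_mul_le _ _
    _ ≤ η / (max M 0 + 1) * (max M 0 + 1) := by
        gcongr
        linarith [hM' w hw]
    _ = η := div_mul_cancel₀ _ (by positivity)

lemma norm_ofReal_mul_exp_mul_I {r : ℝ} (hr : 0 ≤ r) (θ : ℝ) : ‖(r : ℂ) * exp (θ * I)‖ = r := by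
  rw [norm_mul, norm_exp_ofReal_mul_I, mul_one, norm_real, Real.norm_of_nonneg hr]

lemma continuousOn_comp_ofReal_mul {E : Type*} [TopologicalSpace E] {φ : ℂ → E} {e : ℂ}
    (hφ : ContinuousOn φ (ball 0 1)) (he : ‖e‖ = 1) :
    ContinuousOn (fun r : ℝ => φ (r * e)) (Ioo (-1) 1) := by
  refine hφ.comp (by fun_prop) fun r hr => ?_
  rw [mem_ball_zero_iff, norm_mul, he, mul_one, norm_real, Real.norm_eq_abs, abs_lt]
  exact hr

lemma intervalIntegrable_norm_comp_ofReal_mul_div {φ : ℂ → ℂ} {ν : ℂ → ℝ} {e : ℂ} {a b : ℝ}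
    (hφ : ContinuousOn φ (ball 0 1)) (hν : ContinuousOn ν (ball 0 1)) (he : ‖e‖ = 1)
    (ha : -1 < a) (hab : a ≤ b) (hb : b < 1) (hνpos : ∀ r ∈ Icc a b, ν r ≠ 0) :
    IntervalIntegrable (fun r : ℝ => ‖φ (r * e)‖ / ν r) volume a b := by
  have hνr : ContinuousOn (fun r : ℝ => ν r) (Ioo (-1) 1) := by
    simpa using continuousOn_comp_ofReal_mul hν norm_one
  refine ContinuousOn.intervalIntegrable_of_Icc hab (ContinuousOn.div ?_ ?_ hνpos)
  · exact (continuousOn_comp_ofReal_mul hφ he).norm.mono (Icc_subset_Ioo ha hb)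
  · exact hνr.mono (Icc_subset_Ioo ha hb)

lemma norm_integral_mul_le_mul_integral_div {E : Type*} [NormedRing E] [NormedSpace ℝ E]
    {u v : ℝ → E} {ω : ℝ → ℝ} {a b W : ℝ} (hab : a ≤ b)
    (hω : ∀ r ∈ Icc a b, 0 < ω r) (hu : ∀ r ∈ Icc a b, ω r * ‖u r‖ ≤ W)
    (hv : IntervalIntegrable (fun r => ‖v r‖ / ω r) volume a b) :
    ‖∫ r in a..b, u r * v r‖ ≤ W * ∫ r in a..b, ‖v r‖ / ω r := by
  rw [← intervalIntegral.integral_const_mul]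
  refine intervalIntegral.norm_integral_le_of_norm_le hab (ae_of_all _ fun r hr => ?_)
    (hv.const_mul W)
  have hr : r ∈ Icc a b := Ioc_subset_Icc_self hr
  calc ‖u r * v r‖ ≤ ‖u r‖ * ‖v r‖ := norm_mul_le _ _
    _ ≤ W / ω r * ‖v r‖ := by
        gcongr
        rw [le_div_iff₀ (hω r hr), mul_comm]
        exact hu r hr
    _ = W * (‖v r‖ / ω r) := by ring

lemma Tg_ofReal_mul (g f : ℂ → ℂ) (s : ℝ) (e : ℂ) :
    Tg g f (s * e) = e * ∫ r in (0:ℝ)..s, f (r * e) * deriv g (r * e) := by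
  have h := smul_integral_comp_mul_left (a := 0) (b := 1)
    (fun r : ℝ => f (r * e) * deriv g (r * e)) s
  simp only [mul_zero, mul_one, Complex.real_smul, ofReal_mul] at h
  have hray : ∀ t : ℝ, (t : ℂ) * (s * e) = s * t * e := fun t => by ring
  rw [← h, Tg]
  simp_rw [hray]
  ring

lemma norm_Tg_le_of_mem_closedBall {f g : ℂ → ℂ} {z : ℂ} {ρ η : ℝ}
    (hη : ∀ w ∈ closedBall (0:ℂ) ρ, ‖f w * deriv g w‖ ≤ η) (hz : z ∈ closedBall (0:ℂ) ρ) :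
    ‖Tg g f z‖ ≤ ‖z‖ * η := by
  rw [Tg, norm_mul]
  gcongr
  simpa using intervalIntegral.norm_integral_le_of_norm_le_const (a := 0) (b := 1) fun t ht => by
    rw [uIoc_of_le zero_le_one] at ht
    refine hη _ ?_
    rw [mem_closedBall_zero_iff] at hz ⊢
    rw [norm_mul, norm_real, Real.norm_of_nonneg ht.1.le]
    nlinarith [norm_nonneg z, ht.2]

lemma norm_Tg_ofReal_mul_le {f g : ℂ → ℂ} {ω : ℝ → ℝ} {e : ℂ} {a s η W : ℝ} (he : ‖e‖ = 1)
    (ha : 0 ≤ a) (has : a ≤ s) (hs : s < 1)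
    (hf : ContinuousOn f (ball 0 1)) (hg : DifferentiableOn ℂ g (ball 0 1))
    (hη : ∀ r ∈ Icc 0 a, ‖f (r * e) * deriv g (r * e)‖ ≤ η)
    (hω : ∀ r ∈ Icc a s, 0 < ω r) (hW : ∀ r ∈ Icc a s, ω r * ‖f (r * e)‖ ≤ W)
    (hH : IntervalIntegrable (fun r => ‖deriv g (r * e)‖ / ω r) volume a s) :
    ‖Tg g f (s * e)‖ ≤ η * a + W * ∫ r in a..s, ‖deriv g (r * e)‖ / ω r := by
  have hcont : ContinuousOn (fun r : ℝ => f (r * e) * deriv g (r * e)) (Icc 0 s) :=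
    ((continuousOn_comp_ofReal_mul hf he).mul (continuousOn_comp_ofReal_mul
      (hg.analyticOnNhd isOpen_ball).deriv.continuousOn he)).mono
      (Icc_subset_Ioo (by norm_num) hs)
  rw [Tg_ofReal_mul, norm_mul, he, one_mul, ← integral_add_adjacent_intervals
    ((hcont.mono (Icc_subset_Icc_right has)).intervalIntegrable_of_Icc ha)
    ((hcont.mono (Icc_subset_Icc_left ha)).intervalIntegrable_of_Icc has)]
  refine (norm_add_le _ _).trans
    (add_le_add ?_ (norm_integral_mul_le_mul_integral_div has hω hW hH))
  have h := norm_integral_le_of_norm_le_const fun r hr =>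
    hη r (by rw [uIoc_of_le ha] at hr; exact Ioc_subset_Icc_self hr)
  rwa [sub_zero, abs_of_nonneg ha] at h

lemma norm_Tg_le_of_isWeight {ν : ℂ → ℝ} {g f : ℂ → ℂ} {W η a s θ : ℝ} (hν : IsWeight ν)
    (hνpos : ∀ r : ℝ, 0 ≤ r → r < 1 → 0 < ν r) (hg : DifferentiableOn ℂ g (ball 0 1))
    (hf : ContinuousOn f (ball 0 1)) (hfW : ∀ z ∈ ball (0:ℂ) 1, ν z * ‖f z‖ ≤ W)
    (hη : ∀ w ∈ closedBall (0:ℂ) a, ‖f w * deriv g w‖ ≤ η)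
    (ha : 0 ≤ a) (has : a ≤ s) (hs : s < 1) :
    ‖Tg g f (s * exp (θ * I))‖ ≤ η * a + W * ∫ r in a..s, ‖deriv g (r * exp (θ * I))‖ / ν r := by
  have he : ‖exp (θ * I)‖ = 1 := norm_exp_ofReal_mul_I θ
  have hg' := (hg.analyticOnNhd isOpen_ball).deriv.continuousOn
  refine norm_Tg_ofReal_mul_le he ha has hs hf hg (fun r hr => hη _ ?_)
    (fun r hr => hνpos r (ha.trans hr.1) (hr.2.trans_lt hs)) (fun r hr => ?_)
    (intervalIntegrable_norm_comp_ofReal_mul_div hg' hν.1 he (by linarith) has hs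
      fun r hr => (hνpos r (ha.trans hr.1) (hr.2.trans_lt hs)).ne')
  · rw [mem_closedBall_zero_iff, norm_ofReal_mul_exp_mul_I hr.1]
    exact hr.2
  · have hr0 : 0 ≤ r := ha.trans hr.1
    have hmem : (r : ℂ) * exp (θ * I) ∈ ball (0:ℂ) 1 := by
      rw [mem_ball_zero_iff, norm_ofReal_mul_exp_mul_I hr0]
      exact hr.2.trans_lt hs
    have h := hfW _ hmem
    rwa [hν.2.2.1 (_ * _), norm_ofReal_mul_exp_mul_I hr0] at h

lemma mul_norm_Tg_le {ν μ : ℂ → ℝ} {g f : ℂ → ℂ} {B W η ε t₁ t₂ : ℝ}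
    (hν : IsWeight ν) (hμ : IsWeight μ) (hνpos : ∀ r : ℝ, 0 ≤ r → r < 1 → 0 < ν r)
    (hB : ∀ z ∈ ball (0:ℂ) 1, μ z ≤ B) (hg : DifferentiableOn ℂ g (ball 0 1))
    (hf : ContinuousOn f (ball 0 1)) (hfW : ∀ z ∈ ball (0:ℂ) 1, ν z * ‖f z‖ ≤ W) (hW : 0 ≤ W)
    (hε : 0 ≤ ε) (ht₂ : 0 ≤ t₂) (ht₁ : t₁ ∈ Ioo t₂ 1)
    (hvan : ∀ t ∈ Ioo t₁ 1, ∀ θ ∈ Ico 0 (2 * π),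
      μ t * ∫ r in t₂..t, ‖deriv g (r * exp (θ * I))‖ / ν r < ε)
    (hη : ∀ w ∈ closedBall (0:ℂ) t₁, ‖f w * deriv g w‖ ≤ η) {z : ℂ} (hz : z ∈ ball 0 1) :
    μ z * ‖Tg g f z‖ ≤ B * η + W * ε := by
  obtain ⟨θ, hθ, hzθ⟩ := exists_mem_Ico_norm_mul_exp_eq z
  have hz1 : ‖z‖ < 1 := mem_ball_zero_iff.1 hz
  have hzmem : ((‖z‖ : ℝ) : ℂ) ∈ ball (0:ℂ) 1 := by simpa using hz1
  have hμ0 : 0 ≤ μ ‖z‖ := hμ.2.1 _ hzmem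
  have hμB : μ ‖z‖ ≤ B := hB _ hzmem
  have hη0 : 0 ≤ η := (norm_nonneg _).trans (hη 0 (by simpa using ht₂.trans ht₁.1.le))
  rw [hμ.2.2.1 z]
  rcases le_or_gt ‖z‖ t₁ with hzt | hzt
  · have hTg : ‖Tg g f z‖ ≤ η := (norm_Tg_le_of_mem_closedBall hη (by simpa using hzt)).trans
      (mul_le_of_le_one_left hη0 hz1.le)
    exact (mul_le_mul hμB hTg (norm_nonneg _) (hμ0.trans hμB)).trans
      (le_add_of_nonneg_right (mul_nonneg hW hε))
  · have hTg := norm_Tg_le_of_isWeight hν hνpos hg hf hfW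
      (fun w hw => hη w (closedBall_subset_closedBall ht₁.1.le hw)) ht₂ (ht₁.1.trans hzt).le hz1
      (θ := θ)
    have hint := (hvan ‖z‖ ⟨hzt, hz1⟩ θ hθ).le
    calc μ ‖z‖ * ‖Tg g f z‖ = μ ‖z‖ * ‖Tg g f (‖z‖ * exp (θ * I))‖ := by rw [hzθ]
      _ ≤ μ ‖z‖ * (η * t₂ + W * ∫ r in t₂..‖z‖, ‖deriv g (r * exp (θ * I))‖ / ν r) :=
          mul_le_mul_of_nonneg_left hTg hμ0
      _ = μ ‖z‖ * t₂ * η + W * (μ ‖z‖ * ∫ r in t₂..‖z‖, ‖deriv g (r * exp (θ * I))‖ / ν r) := by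
          ring
      _ ≤ B * η + W * ε := by
          gcongr
          exact (mul_le_of_le_one_right hμ0 (ht₁.1.trans ht₁.2).le).trans hμB

/-- The vanishing double-limit condition implies compactness of `T_g : H^∞_ν → H^∞_μ`,
expressed via the sequential criterion. -/
theorem stmt7 (ν μ : ℂ → ℝ) (g : ℂ → ℂ)
    (hν : IsWeight ν) (hμ : IsWeight μ)
    (hνpos : ∀ r : ℝ, 0 ≤ r → r < 1 → 0 < ν ((r:ℝ) : ℂ))
    (hμbdd : ∃ B : ℝ, ∀ z ∈ Metric.ball (0:ℂ) 1, μ z ≤ B)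
    (hg : DifferentiableOn ℂ g (Metric.ball (0:ℂ) 1))
    (hvan : ∀ ε > (0:ℝ), ∃ t₂ ∈ Set.Ico (0:ℝ) 1, ∃ t₁ ∈ Set.Ioo t₂ 1,
      ∀ t ∈ Set.Ioo t₁ 1, ∀ θ ∈ Set.Ico (0:ℝ) (2*Real.pi),
        μ ((t:ℝ) : ℂ) * ∫ r in t₂..t,
          ‖deriv g ((r:ℂ) * Complex.exp ((θ:ℂ) * Complex.I))‖ / ν ((r:ℝ) : ℂ) < ε) :
    ∀ (f : ℕ → ℂ → ℂ) (W : ℝ),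
      (∀ n, DifferentiableOn ℂ (f n) (Metric.ball (0:ℂ) 1)) →
      (∀ n, ∀ z ∈ Metric.ball (0:ℂ) 1, ν z * ‖f n z‖ ≤ W) →
      (∀ K : Set ℂ, K ⊆ Metric.ball (0:ℂ) 1 → IsCompact K →
        TendstoUniformlyOn f 0 Filter.atTop K) →
      ∀ ε > (0:ℝ), ∃ N : ℕ, ∀ n ≥ N, ∀ z ∈ Metric.ball (0:ℂ) 1,
        μ z * ‖Tg g (f n) z‖ ≤ ε := by
  intro f W hf hfW hfK ε hε
  obtain ⟨B, hB⟩ := hμbdd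
  have h0 : (0:ℂ) ∈ ball (0:ℂ) 1 := mem_ball_self one_pos
  have hW : 0 ≤ W := (mul_nonneg (hν.2.1 0 h0) (norm_nonneg _)).trans (hfW 0 0 h0)
  have hB0 : 0 ≤ B := (hμ.2.1 0 h0).trans (hB 0 h0)
  have half : ∀ C, 0 ≤ C → C * (ε / (2 * (C + 1))) ≤ ε / 2 := fun C hC => by
    rw [mul_div_assoc', div_le_div_iff₀ (by positivity) two_pos]
    nlinarith
  obtain ⟨t₂, ht₂, t₁, ht₁, hvan'⟩ := hvan (ε / (2 * (W + 1))) (by positivity)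
  have hK : closedBall (0:ℂ) t₁ ⊆ ball 0 1 := closedBall_subset_ball ht₁.2
  obtain ⟨N, hN⟩ := eventually_atTop.1 <|
    (hfK _ hK (isCompact_closedBall 0 t₁)).eventually_norm_mul_le (isCompact_closedBall 0 t₁)
      ((hg.analyticOnNhd isOpen_ball).deriv.continuousOn.mono hK)
      (η := ε / (2 * (B + 1))) (by positivity)
  refine ⟨N, fun n hn z hz => ?_⟩
  calc μ z * ‖Tg g (f n) z‖ ≤ B * (ε / (2 * (B + 1))) + W * (ε / (2 * (W + 1))) :=
        mul_norm_Tg_le hν hμ hνpos hB hg (hf n).continuousOn (hfW n) hW (by positivity) ht₂.1 ht₁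
          hvan' (hN n hn) hz
    _ ≤ ε := by linarith [half B hB0, half W hW]
end
end

section
/- Let ν and μ be typical weights (weights tending to 0 as |z| → 1⁻) and suppose the operator S_g f(z) = ∫₀ᶻ f'(ω) g(ω) dω maps H^0_ν boundedly into H^0_μ. Then the bidual operator S_g** : H^∞_ν → H^∞_μ (under the identifications (H^0_ν)** = H^∞_ν and (H^0_μ)** = H^∞_μ) acts by the same formula, S_g**(f)(z) = ∫₀ᶻ f'(ω) g(ω) dω; consequently S_g : H^∞_ν → H^∞_μ is bounded with the same norm bound. -/
open Complex Metric Set Filter Real MeasureTheory intervalIntegral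

noncomputable section

/-- A typical weight: `ν(z) → 0` as `|z| → 1⁻`. -/
def IsTypical (ν : ℂ → ℝ) : Prop :=
  ∀ ε > (0:ℝ), ∃ r ∈ Set.Ico (0:ℝ) 1, ∀ z ∈ Metric.ball (0:ℂ) 1,
    r < ‖z‖ → ν z < ε

/-- Membership in the little space `H^0_ν`: `ν(z)|f(z)| → 0` as `|z| → 1⁻`. -/
def VanishesAtBoundary (ν : ℂ → ℝ) (f : ℂ → ℂ) : Prop :=
  ∀ ε > (0:ℝ), ∃ r ∈ Set.Ico (0:ℝ) 1, ∀ z ∈ Metric.ball (0:ℂ) 1,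
    r < ‖z‖ → ν z * ‖f z‖ < ε

open scoped Topology

/-!
For `0 ≤ r < 1` the dilation `f (r ·)` of `f ∈ H^∞_ν` is bounded on the disc, hence lies in
`H^0_ν`, and since `ν` is radial and nonincreasing in `|z|` it obeys the same bound
`ν |f (r ·)| ≤ C`. The hypothesis then gives `μ |S_g (f (r ·))| ≤ M C`, and
`S_g (f (r ·)) z → S_g f z` as `r → 1⁻` by dominated convergence: all the integrands live on the
compact disc of radius `|z|`.
-/

lemma norm_ofReal_mul_le {r : ℝ} (hr : r ∈ Icc (0:ℝ) 1) (w : ℂ) : ‖(r:ℂ) * w‖ ≤ ‖w‖ := by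
  rw [norm_mul, Complex.norm_real, Real.norm_of_nonneg hr.1]
  exact mul_le_of_le_one_left (norm_nonneg w) hr.2

lemma IsWeight.le_of_norm_le {ν : ℂ → ℝ} (hν : IsWeight ν) {z w : ℂ} (hzw : ‖z‖ ≤ ‖w‖)
    (hw : ‖w‖ < 1) : ν w ≤ ν z := by
  rw [hν.2.2.1 w, hν.2.2.1 z]
  exact hν.2.2.2 _ _ (norm_nonneg z) hzw hw

lemma IsWeight.mul_norm_dilation_le {ν : ℂ → ℝ} (hν : IsWeight ν) {f : ℂ → ℂ} {C : ℝ}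
    (hC : ∀ z ∈ ball (0:ℂ) 1, ν z * ‖f z‖ ≤ C) {r : ℝ} (hr : r ∈ Icc (0:ℝ) 1) :
    ∀ w ∈ ball (0:ℂ) 1, ν w * ‖f (r * w)‖ ≤ C := by
  intro w hw
  have hw1 : ‖w‖ < 1 := mem_ball_zero_iff.mp hw
  have hrw : ‖(r:ℂ) * w‖ ≤ ‖w‖ := norm_ofReal_mul_le hr w
  calc ν w * ‖f (r * w)‖ ≤ ν (r * w) * ‖f (r * w)‖ :=
        mul_le_mul_of_nonneg_right (hν.le_of_norm_le hrw hw1) (norm_nonneg _)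
    _ ≤ C := hC _ (mem_ball_zero_iff.mpr (hrw.trans_lt hw1))

lemma VanishesAtBoundary.of_norm_le {ν : ℂ → ℝ} (hν : IsTypical ν) {f : ℂ → ℂ} {B : ℝ}
    (hB : ∀ z ∈ ball (0:ℂ) 1, ‖f z‖ ≤ B) : VanishesAtBoundary ν f := by
  intro ε hε
  have hB0 : 0 ≤ B := (norm_nonneg _).trans (hB 0 (mem_ball_self one_pos))
  obtain ⟨r, hr, hνr⟩ := hν (ε / (B + 1)) (by positivity)
  refine ⟨r, hr, fun z hz hrz => ?_⟩
  have hνz : ν z * (B + 1) < ε := (lt_div_iff₀ (by positivity)).mp (hνr z hz hrz)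
  have hfz := hB z hz
  nlinarith [norm_nonneg (f z)]

lemma DifferentiableOn.dilation {f : ℂ → ℂ} (hf : DifferentiableOn ℂ f (ball (0:ℂ) 1)) {r : ℝ}
    (hr : r ∈ Icc (0:ℝ) 1) : DifferentiableOn ℂ (fun w => f (r * w)) (ball (0:ℂ) 1) :=
  hf.comp (differentiableOn_id.const_mul _) fun w hw =>
    mem_ball_zero_iff.mpr ((norm_ofReal_mul_le hr w).trans_lt (mem_ball_zero_iff.mp hw))

lemma vanishesAtBoundary_dilation {ν : ℂ → ℝ} (hν : IsTypical ν) {f : ℂ → ℂ}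
    (hf : ContinuousOn f (ball (0:ℂ) 1)) {r : ℝ} (hr : r ∈ Ico (0:ℝ) 1) :
    VanishesAtBoundary ν (fun w => f (r * w)) := by
  obtain ⟨B, hB⟩ := (isCompact_closedBall (0:ℂ) r).exists_bound_of_continuousOn
    (hf.mono (closedBall_subset_ball hr.2))
  refine VanishesAtBoundary.of_norm_le hν (B := B) fun w hw => hB _ ?_
  rw [mem_closedBall_zero_iff, norm_mul, Complex.norm_real, Real.norm_of_nonneg hr.1]
  exact mul_le_of_le_one_right hr.1 (mem_ball_zero_iff.mp hw).le

lemma Sg_dilation (g f : ℂ → ℂ) (c z : ℂ) :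
    Sg g (fun w => f (c * w)) z = z * ∫ t in (0:ℝ)..1, c * deriv f (c * (t * z)) * g (t * z) := by
  simp only [Sg, deriv_comp_mul_left, smul_eq_mul]

lemma continuousOn_integral_dilation {φ ψ : ℂ → ℂ} (hφ : ContinuousOn φ (ball (0:ℂ) 1))
    (hψ : ContinuousOn ψ (ball (0:ℂ) 1)) {z : ℂ} (hz : z ∈ ball (0:ℂ) 1) :
    ContinuousOn (fun r : ℝ => ∫ t in (0:ℝ)..1, r * φ (r * (t * z)) * ψ (t * z)) (Icc 0 1) := by
  have hK : closedBall (0:ℂ) ‖z‖ ⊆ ball 0 1 := closedBall_subset_ball (mem_ball_zero_iff.mp hz)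
  have hmem : ∀ r ∈ Icc (0:ℝ) 1, ∀ t ∈ Icc (0:ℝ) 1, (r:ℂ) * (t * z) ∈ closedBall (0:ℂ) ‖z‖ :=
    fun r hr t ht => mem_closedBall_zero_iff.mpr
      ((norm_ofReal_mul_le hr _).trans (norm_ofReal_mul_le ht z))
  have hmem' : ∀ t ∈ Icc (0:ℝ) 1, (t:ℂ) * z ∈ closedBall (0:ℂ) ‖z‖ :=
    fun t ht => mem_closedBall_zero_iff.mpr (norm_ofReal_mul_le ht z)
  obtain ⟨A, hA⟩ := (isCompact_closedBall (0:ℂ) ‖z‖).exists_bound_of_continuousOn (hφ.mono hK)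
  obtain ⟨B, hB⟩ := (isCompact_closedBall (0:ℂ) ‖z‖).exists_bound_of_continuousOn (hψ.mono hK)
  have hIoc : uIoc (0:ℝ) 1 ⊆ Icc 0 1 := by
    rw [uIoc_of_le zero_le_one]; exact Ioc_subset_Icc_self
  intro r₀ hr₀
  refine intervalIntegral.continuousWithinAt_of_dominated_interval (bound := fun _ => A * B)
    ?_ ?_ intervalIntegrable_const ?_
  · filter_upwards [self_mem_nhdsWithin] with r hr
    refine ContinuousOn.aestronglyMeasurable (ContinuousOn.mono ?_ hIoc) measurableSet_uIoc
    exact (continuousOn_const.mul (hφ.comp (by fun_prop) fun t ht => hK (hmem r hr t ht))).mul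
      (hψ.comp (by fun_prop) fun t ht => hK (hmem' t ht))
  · filter_upwards [self_mem_nhdsWithin] with r hr
    refine Eventually.of_forall fun t ht => ?_
    rw [norm_mul, norm_mul, Complex.norm_real, Real.norm_of_nonneg hr.1]
    have hφA := hA _ (hmem r hr t (hIoc ht))
    have hψB := hB _ (hmem' t (hIoc ht))
    calc r * ‖φ (r * (t * z))‖ * ‖ψ (t * z)‖ ≤ 1 * A * B :=
          mul_le_mul (mul_le_mul hr.2 hφA (norm_nonneg _) zero_le_one) hψB (norm_nonneg _)
            (by linarith [(norm_nonneg _).trans hφA])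
      _ = A * B := by rw [one_mul]
  · refine Eventually.of_forall fun t ht => ContinuousAt.continuousWithinAt ?_
    have hφt : ContinuousAt φ ((r₀:ℂ) * (t * z)) :=
      hφ.continuousAt (isOpen_ball.mem_nhds (hK (hmem r₀ hr₀ t (hIoc ht))))
    exact (continuous_ofReal.continuousAt.mul
      (hφt.comp (f := fun x : ℝ => (x:ℂ) * (t * z)) (by fun_prop))).mul continuousAt_const

lemma continuousOn_Sg_dilation {g f : ℂ → ℂ} (hg : ContinuousOn g (ball (0:ℂ) 1))
    (hf : DifferentiableOn ℂ f (ball (0:ℂ) 1)) {z : ℂ} (hz : z ∈ ball (0:ℂ) 1) :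
    ContinuousOn (fun r : ℝ => Sg g (fun w => f (r * w)) z) (Icc 0 1) := by
  simp only [Sg_dilation]
  exact continuousOn_const.mul (continuousOn_integral_dilation
    (hf.analyticOnNhd isOpen_ball).deriv.continuousOn hg hz)

theorem stmt8_general (ν μ : ℂ → ℝ) (g : ℂ → ℂ) (M : ℝ)
    (hν : IsWeight ν)
    (hνtyp : IsTypical ν)
    (hg : DifferentiableOn ℂ g (Metric.ball (0:ℂ) 1))
    (hbd0 : ∀ f : ℂ → ℂ, DifferentiableOn ℂ f (Metric.ball (0:ℂ) 1) →
      VanishesAtBoundary ν f →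
      (VanishesAtBoundary μ (Sg g f) ∧
        ∀ C : ℝ, (∀ z ∈ Metric.ball (0:ℂ) 1, ν z * ‖f z‖ ≤ C) →
          ∀ z ∈ Metric.ball (0:ℂ) 1, μ z * ‖Sg g f z‖ ≤ M * C)) :
    ∀ f : ℂ → ℂ, DifferentiableOn ℂ f (Metric.ball (0:ℂ) 1) →
      ∀ C : ℝ, (∀ z ∈ Metric.ball (0:ℂ) 1, ν z * ‖f z‖ ≤ C) →
      ∀ z ∈ Metric.ball (0:ℂ) 1, μ z * ‖Sg g f z‖ ≤ M * C := by
  intro f hf C hC z hz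
  have hlim : Tendsto (fun r : ℝ => Sg g (fun w => f (r * w)) z) (𝓝[<] 1) (𝓝 (Sg g f z)) := by
    have h1 := (continuousOn_Sg_dilation hg.continuousOn hf hz 1
      (right_mem_Icc.mpr zero_le_one)).mono_of_mem_nhdsWithin
      (mem_of_superset (Ioo_mem_nhdsLT zero_lt_one) Ioo_subset_Icc_self)
    unfold ContinuousWithinAt at h1
    simpa only [Complex.ofReal_one, one_mul] using h1
  refine le_of_tendsto (hlim.norm.const_mul (μ z)) ?_
  filter_upwards [Ioo_mem_nhdsLT zero_lt_one] with r hr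
  exact (hbd0 _ (hf.dilation ⟨hr.1.le, hr.2.le⟩)
    (vanishesAtBoundary_dilation hνtyp hf.continuousOn ⟨hr.1.le, hr.2⟩)).2 C
    (hν.mul_norm_dilation_le hC ⟨hr.1.le, hr.2.le⟩) z hz

/-- If `S_g : H^0_ν → H^0_μ` is bounded with bound `M` (for typical weights `ν, μ`), then its
biextension `S_g` acts on all of `H^∞_ν` by the same formula and is bounded
`H^∞_ν → H^∞_μ` with the same norm bound. -/
theorem stmt8 (ν μ : ℂ → ℝ) (g : ℂ → ℂ) (M : ℝ)
    (hν : IsWeight ν) (hμ : IsWeight μ)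
    (hνtyp : IsTypical ν) (hμtyp : IsTypical μ)
    (hg : DifferentiableOn ℂ g (Metric.ball (0:ℂ) 1))
    (hbd0 : ∀ f : ℂ → ℂ, DifferentiableOn ℂ f (Metric.ball (0:ℂ) 1) →
      VanishesAtBoundary ν f →
      (VanishesAtBoundary μ (Sg g f) ∧
        ∀ C : ℝ, (∀ z ∈ Metric.ball (0:ℂ) 1, ν z * ‖f z‖ ≤ C) →
          ∀ z ∈ Metric.ball (0:ℂ) 1, μ z * ‖Sg g f z‖ ≤ M * C)) :
    ∀ f : ℂ → ℂ, DifferentiableOn ℂ f (Metric.ball (0:ℂ) 1) →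
      ∀ C : ℝ, (∀ z ∈ Metric.ball (0:ℂ) 1, ν z * ‖f z‖ ≤ C) →
      ∀ z ∈ Metric.ball (0:ℂ) 1, μ z * ‖Sg g f z‖ ≤ M * C :=
  stmt8_general ν μ g M hν hνtyp hg hbd0
end
end

section
/- Let ν and μ be positive weights on the unit disk and g analytic on 𝔻. Then S_g maps the Bloch type space B^∞_ν boundedly into B^∞_μ if and only if sup_{z∈𝔻} |g(z)| μ(z)/ν̃(z) < ∞, where ν̃ is the associated weight of ν. Equivalently, since (S_g f)' = f' g, this is the statement that the multiplication operator M_g : H^∞_ν → H^∞_μ is bounded iff sup_z |g(z)| μ(z)/ν̃(z) < ∞. -/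
open Complex Metric Set Filter Real MeasureTheory

noncomputable section

/-!
Differentiation identifies `B^∞_ν` (modulo constants) with `H^∞_ν`, since on the disc every
holomorphic function has a primitive; under this identification `S_g` becomes the multiplication
operator `M_g : H^∞_ν → H^∞_μ`. The bound `μ(z) |h(z)| |g(z)| ≤ M ‖h‖` for all `h` and `z` is
the same as `|g(z)| μ(z) ‖δ_z‖ ≤ M`, where `δ_z` is evaluation at `z` on `H^∞_ν`, and
`‖δ_z‖ = 1 / ν̃(z)` by the definition of the associated weight.
-/

lemma Real.mul_sSup_le_of_nonneg {s : Set ℝ} {c M : ℝ} (hc : 0 ≤ c) (hs : s.Nonempty)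
    (h : ∀ a ∈ s, c * a ≤ M) : c * sSup s ≤ M := by
  rw [← smul_eq_mul, ← Real.sSup_smul_of_nonneg hc]
  exact csSup_le (hs.smul_set) (forall_mem_image.2 h)

/-- The values `|h(z)|` of the functions `h` in the closed unit ball of `H^∞_ν`. -/
def weightedUnitBallValues (ν : ℂ → ℝ) (z : ℂ) : Set ℝ :=
  {a : ℝ | ∃ f : ℂ → ℂ, DifferentiableOn ℂ f (ball (0:ℂ) 1) ∧
      (∀ w ∈ ball (0:ℂ) 1, ν w * ‖f w‖ ≤ 1) ∧ a = ‖f z‖}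

section WeightedUnitBallValues

variable {ν : ℂ → ℝ} {z : ℂ}

lemma div_assocWeight (a : ℝ) :
    a / assocWeight ν z = a * sSup (weightedUnitBallValues ν z) := by
  rw [assocWeight, div_inv_eq_mul]
  rfl

lemma weightedUnitBallValues_nonempty : (weightedUnitBallValues ν z).Nonempty :=
  ⟨0, fun _ => 0, differentiableOn_const 0, fun w _ => by simp, by simp⟩

lemma bddAbove_weightedUnitBallValues (hz : z ∈ ball (0:ℂ) 1) (hνz : 0 < ν z) :
    BddAbove (weightedUnitBallValues ν z) := by
  refine ⟨(ν z)⁻¹, ?_⟩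
  rintro _ ⟨f, -, hf, rfl⟩
  rw [← mul_one (ν z)⁻¹, le_inv_mul_iff₀ hνz]
  exact hf z hz

lemma norm_le_sSup_weightedUnitBallValues_mul {f : ℂ → ℂ} {C : ℝ}
    (hf : DifferentiableOn ℂ f (ball (0:ℂ) 1)) (hfC : ∀ w ∈ ball (0:ℂ) 1, ν w * ‖f w‖ ≤ C)
    (hC : 0 ≤ C) (hz : z ∈ ball (0:ℂ) 1) (hνz : 0 < ν z) :
    ‖f z‖ ≤ sSup (weightedUnitBallValues ν z) * C := by
  rcases hC.eq_or_lt with rfl | hC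
  · rw [mul_zero]
    exact nonpos_of_mul_nonpos_right (hfC z hz) hνz
  · rw [← div_le_iff₀ hC]
    refine le_csSup (bddAbove_weightedUnitBallValues hz hνz)
      ⟨fun w => f w / C, hf.div_const _, fun w hw => ?_, ?_⟩
    · rw [norm_div, Complex.norm_real, Real.norm_of_nonneg hC.le, ← mul_div_assoc,
        div_le_one hC]
      exact hfC w hw
    · rw [norm_div, Complex.norm_real, Real.norm_of_nonneg hC.le]

end WeightedUnitBallValues

theorem stmt10_general (ν μ : ℂ → ℝ) (g : ℂ → ℂ)
    (hμ : IsWeight μ)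
    (hνpos : ∀ z ∈ Metric.ball (0:ℂ) 1, 0 < ν z) :
    (∃ M : ℝ, ∀ f : ℂ → ℂ, DifferentiableOn ℂ f (Metric.ball (0:ℂ) 1) →
      ∀ C : ℝ, (‖f 0‖ ≤ C ∧
          ∀ z ∈ Metric.ball (0:ℂ) 1, ν z * ‖deriv f z‖ ≤ C) →
      ∀ z ∈ Metric.ball (0:ℂ) 1,
        μ z * (‖deriv f z‖ * ‖g z‖) ≤ M * C)
    ↔ (∃ M : ℝ, ∀ z ∈ Metric.ball (0:ℂ) 1,
        ‖g z‖ * μ z / assocWeight ν z ≤ M) := by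
  constructor
  · rintro ⟨M, hM⟩
    refine ⟨M, fun z hz => ?_⟩
    rw [div_assocWeight]
    refine Real.mul_sSup_le_of_nonneg (mul_nonneg (norm_nonneg _) (hμ.2.1 z hz))
      weightedUnitBallValues_nonempty ?_
    rintro _ ⟨h, hh, hh1, rfl⟩
    obtain ⟨F, hF0, hF⟩ := hh.isExactOn_ball.with_val_at 0 0
    have hFderiv : ∀ w ∈ ball (0:ℂ) 1, deriv F w = h w := fun w hw => (hF w hw).deriv
    have hFbound := hM F (fun w hw => (hF w hw).differentiableAt.differentiableWithinAt) 1
      ⟨by simp [hF0], fun w hw => hFderiv w hw ▸ hh1 w hw⟩ z hz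
    rw [hFderiv z hz, mul_one] at hFbound
    linarith
  · rintro ⟨M, hM⟩
    refine ⟨M, fun f hf C ⟨hf0, hfC⟩ z hz => ?_⟩
    have hC : 0 ≤ C := (norm_nonneg _).trans hf0
    have hf'z := norm_le_sSup_weightedUnitBallValues_mul (hf.deriv isOpen_ball) hfC hC hz
      (hνpos z hz)
    have hgμ := hM z hz
    rw [div_assocWeight] at hgμ
    have hμz := hμ.2.1 z hz
    calc μ z * (‖deriv f z‖ * ‖g z‖) = ‖g z‖ * μ z * ‖deriv f z‖ := by ring
      _ ≤ ‖g z‖ * μ z * (sSup (weightedUnitBallValues ν z) * C) := by gcongr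
      _ = ‖g z‖ * μ z * sSup (weightedUnitBallValues ν z) * C := by ring
      _ ≤ M * C := by gcongr

/-- `S_g : B^∞_ν → B^∞_μ` is bounded iff `sup_z |g(z)| μ(z)/ν̃(z) < ∞`.  Since
`(S_g f)' = f'·g` and `S_g f(0) = 0`, boundedness is expressed through the Bloch norms. -/
theorem stmt10 (ν μ : ℂ → ℝ) (g : ℂ → ℂ)
    (hν : IsWeight ν) (hμ : IsWeight μ)
    (hνpos : ∀ z ∈ Metric.ball (0:ℂ) 1, 0 < ν z)
    (hμpos : ∀ z ∈ Metric.ball (0:ℂ) 1, 0 < μ z)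
    (hg : DifferentiableOn ℂ g (Metric.ball (0:ℂ) 1)) :
    (∃ M : ℝ, ∀ f : ℂ → ℂ, DifferentiableOn ℂ f (Metric.ball (0:ℂ) 1) →
      ∀ C : ℝ, (‖f 0‖ ≤ C ∧
          ∀ z ∈ Metric.ball (0:ℂ) 1, ν z * ‖deriv f z‖ ≤ C) →
      ∀ z ∈ Metric.ball (0:ℂ) 1,
        μ z * (‖deriv f z‖ * ‖g z‖) ≤ M * C)
    ↔ (∃ M : ℝ, ∀ z ∈ Metric.ball (0:ℂ) 1,
        ‖g z‖ * μ z / assocWeight ν z ≤ M) :=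
  stmt10_general ν μ g hμ hνpos
end
end

section
/- Let ν and μ be typical weights (ν(z) → 0 and μ(z) → 0 as |z| → 1⁻) and g analytic on 𝔻. If S_g : H^∞_ν → H^∞_μ is bounded and g satisfies sup_z (μ(z)/ν(z))|g(z)| < ∞ with ν satisfying the derivative estimate of property (U), then S_g maps H^0_ν into H^0_μ boundedly: for every f with ν(z)|f(z)| → 0 as |z| → 1⁻, also μ(z)|S_g f(z)| → 0 as |z| → 1⁻, given that polynomials are dense in H^0_ν and H^0_μ is closed in H^∞_μ. -/
/-!
Since `ν` is typical, the bound `μ |g| ≤ B ν` forces `μ(z) |g(z)| → 0` at the boundary, and the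
monotonicity of `μ` makes `μ(z) |g(tz)|` small uniformly in `t ∈ [0, 1]`. Hence `S_g p ∈ H^0_μ` for
every polynomial `p`, its derivative being bounded on the disc. A general `f ∈ H^0_ν` is a
`‖·‖_ν`-limit of polynomials; boundedness of `S_g` turns this into a `‖·‖_μ`-approximation of
`S_g f` by elements of `H^0_μ`, and `H^0_μ` is closed.
-/

open Complex Metric Set Filter Real MeasureTheory intervalIntegral

noncomputable section

lemma mul_div_add_one_lt {a ε : ℝ} (ha : 0 ≤ a) (hε : 0 < ε) : a * (ε / (a + 1)) < ε := by
  rw [mul_div_assoc', div_lt_iff₀ (by positivity)]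
  nlinarith

lemma norm_ofReal_mul_le_s19 {t : ℝ} (ht : t ∈ Icc (0:ℝ) 1) (z : ℂ) : ‖(t:ℂ) * z‖ ≤ ‖z‖ := by
  rw [norm_mul, Complex.norm_real, Real.norm_of_nonneg ht.1]
  exact mul_le_of_le_one_left (norm_nonneg z) ht.2

lemma IsWeight.le_of_norm_le_s19 {μ : ℂ → ℝ} (hμ : IsWeight μ) {z w : ℂ} (hwz : ‖w‖ ≤ ‖z‖)
    (hz : ‖z‖ < 1) : μ z ≤ μ w := by
  rw [hμ.2.2.1 z, hμ.2.2.1 w]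
  exact hμ.2.2.2 _ _ (norm_nonneg w) hwz hz

lemma intervalIntegrable_deriv_mul_comp_ofReal_mul {f g : ℂ → ℂ}
    (hf : DifferentiableOn ℂ f (ball 0 1)) (hg : ContinuousOn g (ball 0 1)) {z : ℂ}
    (hz : z ∈ ball (0:ℂ) 1) :
    IntervalIntegrable (fun t : ℝ => deriv f ((t:ℂ) * z) * g ((t:ℂ) * z)) volume 0 1 := by
  have hmaps : MapsTo (fun t : ℝ => (t:ℂ) * z) (uIcc 0 1) (ball 0 1) := fun t ht =>
    mem_ball_zero_iff.mpr ((norm_ofReal_mul_le_s19 (by rwa [uIcc_of_le zero_le_one] at ht) z).trans_lt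
      (mem_ball_zero_iff.mp hz))
  have hline : ContinuousOn (fun t : ℝ => (t:ℂ) * z) (uIcc 0 1) := by fun_prop
  have hf' : ContinuousOn (deriv f) (ball 0 1) :=
    (hf.analyticOnNhd isOpen_ball).deriv.continuousOn
  exact ((hf'.comp hline hmaps).mul (hg.comp hline hmaps)).intervalIntegrable

lemma Sg_sub_Sg {f h g : ℂ → ℂ} (hf : DifferentiableOn ℂ f (ball 0 1))
    (hh : DifferentiableOn ℂ h (ball 0 1)) (hg : ContinuousOn g (ball 0 1)) {z : ℂ}
    (hz : z ∈ ball (0:ℂ) 1) :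
    Sg g f z - Sg g h z = Sg g (fun w => f w - h w) z := by
  rw [Sg, Sg, Sg, ← mul_sub, ← intervalIntegral.integral_sub
    (intervalIntegrable_deriv_mul_comp_ofReal_mul hf hg hz)
    (intervalIntegrable_deriv_mul_comp_ofReal_mul hh hg hz)]
  congr 1
  refine intervalIntegral.integral_congr fun t ht => ?_
  have htz : (t:ℂ) * z ∈ ball (0:ℂ) 1 := mem_ball_zero_iff.mpr
    ((norm_ofReal_mul_le_s19 (by rwa [uIcc_of_le zero_le_one] at ht) z).trans_lt
      (mem_ball_zero_iff.mp hz))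
  rw [deriv_fun_sub (hf.differentiableAt (isOpen_ball.mem_nhds htz))
    (hh.differentiableAt (isOpen_ball.mem_nhds htz)), sub_mul]

lemma Polynomial.exists_norm_deriv_eval_le (p : Polynomial ℂ) :
    ∃ K, ∀ w ∈ ball (0:ℂ) 1, ‖deriv (fun w => p.eval w) w‖ ≤ K := by
  obtain ⟨K, hK⟩ := (isCompact_closedBall (0:ℂ) 1).exists_bound_of_continuousOn
    p.derivative.continuous.continuousOn
  exact ⟨K, fun w hw => by rw [Polynomial.deriv]; exact hK w (ball_subset_closedBall hw)⟩

lemma vanishesAtBoundary_of_le_const_mul {μ ν : ℂ → ℝ} {g : ℂ → ℂ} {B : ℝ}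
    (hν : IsTypical ν) (hB : 0 ≤ B) (hg : ∀ w ∈ ball (0:ℂ) 1, μ w * ‖g w‖ ≤ B * ν w) :
    VanishesAtBoundary μ g := by
  intro ε hε
  obtain ⟨r, hr, hνr⟩ := hν (ε / (B + 1)) (by positivity)
  refine ⟨r, hr, fun w hw hrw => ?_⟩
  calc μ w * ‖g w‖ ≤ B * ν w := hg w hw
    _ ≤ B * (ε / (B + 1)) := mul_le_mul_of_nonneg_left (hνr w hw hrw).le hB
    _ < ε := mul_div_add_one_lt hB hε

lemma vanishesAtBoundary_of_forall_approx {μ : ℂ → ℝ} {F : ℂ → ℂ}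
    (hμ : ∀ z ∈ ball (0:ℂ) 1, 0 ≤ μ z)
    (hF : ∀ ε > (0:ℝ), ∃ G : ℂ → ℂ, VanishesAtBoundary μ G ∧
      ∀ z ∈ ball (0:ℂ) 1, μ z * ‖F z - G z‖ ≤ ε) :
    VanishesAtBoundary μ F := by
  intro ε hε
  obtain ⟨G, hG, hFG⟩ := hF (ε / 2) (half_pos hε)
  obtain ⟨r, hr, hGr⟩ := hG (ε / 2) (half_pos hε)
  refine ⟨r, hr, fun z hz hrz => ?_⟩
  calc μ z * ‖F z‖ ≤ μ z * ‖F z - G z‖ + μ z * ‖G z‖ := by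
        rw [← mul_add]
        exact mul_le_mul_of_nonneg_left (norm_le_norm_sub_add _ _) (hμ z hz)
    _ < ε / 2 + ε / 2 := add_lt_add_of_le_of_lt (hFG z hz) (hGr z hz hrz)
    _ = ε := add_halves ε

/- For `‖w‖ ≤ r₁` the factor `g w` is bounded and `μ z` is small; for `‖w‖ > r₁` monotonicity
of the weight gives `μ z ‖g w‖ ≤ μ w ‖g w‖`, which is small. -/
lemma VanishesAtBoundary.exists_radius_forall_norm_le {μ : ℂ → ℝ} {g : ℂ → ℂ}
    (hμg : VanishesAtBoundary μ g) (hμ : IsWeight μ) (hμtyp : IsTypical μ)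
    (hg : ContinuousOn g (ball 0 1)) :
    ∀ ε > (0:ℝ), ∃ r ∈ Ico (0:ℝ) 1, ∀ z ∈ ball (0:ℂ) 1, r < ‖z‖ →
      ∀ w : ℂ, ‖w‖ ≤ ‖z‖ → μ z * ‖g w‖ < ε := by
  intro ε hε
  obtain ⟨r₁, hr₁, hgr₁⟩ := hμg ε hε
  obtain ⟨G, hG⟩ := (isCompact_closedBall (0:ℂ) r₁).exists_bound_of_continuousOn
    (hg.mono (closedBall_subset_ball hr₁.2))
  obtain ⟨r, hr, hμr⟩ := hμtyp (ε / (|G| + 1)) (by positivity)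
  refine ⟨r, hr, fun z hz hrz w hwz => ?_⟩
  have hz1 : ‖z‖ < 1 := mem_ball_zero_iff.mp hz
  rcases le_or_gt ‖w‖ r₁ with hw | hw
  · calc μ z * ‖g w‖ ≤ μ z * (|G| + 1) := by
          refine mul_le_mul_of_nonneg_left ?_ (hμ.2.1 z hz)
          linarith [hG w (mem_closedBall_zero_iff.mpr hw), le_abs_self G]
      _ < ε := (lt_div_iff₀ (by positivity)).mp (hμr z hz hrz)
  · calc μ z * ‖g w‖ ≤ μ w * ‖g w‖ :=
          mul_le_mul_of_nonneg_right (hμ.le_of_norm_le_s19 hwz hz1) (norm_nonneg _)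
      _ < ε := hgr₁ w (mem_ball_zero_iff.mpr (hwz.trans_lt hz1)) hw

lemma vanishesAtBoundary_Sg_of_norm_deriv_le {μ : ℂ → ℝ} {f g : ℂ → ℂ} {K : ℝ}
    (hμ : IsWeight μ) (hμtyp : IsTypical μ) (hg : ContinuousOn g (ball 0 1))
    (hμg : VanishesAtBoundary μ g) (hK : ∀ w ∈ ball (0:ℂ) 1, ‖deriv f w‖ ≤ K) :
    VanishesAtBoundary μ (Sg g f) := by
  intro ε hε
  obtain ⟨r, hr, hsmall⟩ :=
    hμg.exists_radius_forall_norm_le hμ hμtyp hg (ε / (|K| + 1)) (by positivity)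
  refine ⟨r, hr, fun z hz hrz => ?_⟩
  have hz1 : ‖z‖ < 1 := mem_ball_zero_iff.mp hz
  have hμz : 0 ≤ μ z := hμ.2.1 z hz
  have hintegrand : ∀ t ∈ uIoc (0:ℝ) 1,
      ‖(μ z : ℂ) * (deriv f ((t:ℂ) * z) * g ((t:ℂ) * z))‖ ≤ |K| * (ε / (|K| + 1)) := by
    intro t ht
    rw [uIoc_of_le zero_le_one] at ht
    have htz : ‖(t:ℂ) * z‖ ≤ ‖z‖ := norm_ofReal_mul_le_s19 (Ioc_subset_Icc_self ht) z
    rw [norm_mul, norm_mul, Complex.norm_real, Real.norm_of_nonneg hμz, mul_left_comm]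
    exact mul_le_mul ((hK _ (mem_ball_zero_iff.mpr (htz.trans_lt hz1))).trans (le_abs_self K))
      (hsmall z hz hrz _ htz).le (by positivity) (abs_nonneg K)
  calc μ z * ‖Sg g f z‖
      = ‖z‖ * ‖∫ t in (0:ℝ)..1, (μ z : ℂ) * (deriv f ((t:ℂ) * z) * g ((t:ℂ) * z))‖ := by
        rw [Sg, intervalIntegral.integral_const_mul, norm_mul, norm_mul, Complex.norm_real,
          Real.norm_of_nonneg hμz]
        ring
    _ ≤ 1 * (|K| * (ε / (|K| + 1)) * |1 - 0|) :=
        mul_le_mul hz1.le (intervalIntegral.norm_integral_le_of_norm_le_const hintegrand)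
          (norm_nonneg _) zero_le_one
    _ < ε := by
        rw [one_mul, sub_zero, abs_one, mul_one]
        exact mul_div_add_one_lt (abs_nonneg K) hε

theorem stmt19_general (ν μ : ℂ → ℝ) (g : ℂ → ℂ) (M B : ℝ)
    (hμ : IsWeight μ)
    (hνtyp : IsTypical ν) (hμtyp : IsTypical μ)
    (hνpos : ∀ z ∈ Metric.ball (0:ℂ) 1, 0 < ν z)
    (hg : DifferentiableOn ℂ g (Metric.ball (0:ℂ) 1))
    -- boundedness of S_g : H^∞_ν → H^∞_μ with bound M
    (hbdd : ∀ f : ℂ → ℂ, DifferentiableOn ℂ f (Metric.ball (0:ℂ) 1) →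
      ∀ C : ℝ, (∀ z ∈ Metric.ball (0:ℂ) 1, ν z * ‖f z‖ ≤ C) →
      ∀ z ∈ Metric.ball (0:ℂ) 1, μ z * ‖Sg g f z‖ ≤ M * C)
    -- sup (μ/ν)|g| ≤ B
    (hgB : ∀ z ∈ Metric.ball (0:ℂ) 1, μ z / ν z * ‖g z‖ ≤ B)
    -- density of polynomials in H^0_ν
    (hdense : ∀ f : ℂ → ℂ, DifferentiableOn ℂ f (Metric.ball (0:ℂ) 1) →
      VanishesAtBoundary ν f → ∀ ε > (0:ℝ), ∃ p : Polynomial ℂ,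
        ∀ z ∈ Metric.ball (0:ℂ) 1, ν z * ‖f z - p.eval z‖ ≤ ε) :
    ∀ f : ℂ → ℂ, DifferentiableOn ℂ f (Metric.ball (0:ℂ) 1) →
      VanishesAtBoundary ν f → VanishesAtBoundary μ (Sg g f) := by
  intro f hf hfvan
  have h0 : (0:ℂ) ∈ ball (0:ℂ) 1 := mem_ball_self one_pos
  have hB : 0 ≤ B :=
    (mul_nonneg (div_nonneg (hμ.2.1 0 h0) (hνpos 0 h0).le) (norm_nonneg _)).trans (hgB 0 h0)
  have hμg : VanishesAtBoundary μ g := vanishesAtBoundary_of_le_const_mul hνtyp hB fun w hw => by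
    have := hgB w hw
    rwa [div_mul_eq_mul_div, div_le_iff₀ (hνpos w hw)] at this
  refine vanishesAtBoundary_of_forall_approx hμ.2.1 fun ε hε => ?_
  obtain ⟨p, hp⟩ := hdense f hf hfvan (ε / (|M| + 1)) (by positivity)
  obtain ⟨K, hK⟩ := p.exists_norm_deriv_eval_le
  refine ⟨Sg g (fun w => p.eval w),
    vanishesAtBoundary_Sg_of_norm_deriv_le hμ hμtyp hg.continuousOn hμg hK, fun z hz => ?_⟩
  rw [Sg_sub_Sg hf p.differentiable.differentiableOn hg.continuousOn hz]
  calc μ z * ‖Sg g (fun w => f w - p.eval w) z‖ ≤ M * (ε / (|M| + 1)) :=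
        hbdd _ (hf.sub p.differentiable.differentiableOn) _ hp z hz
    _ ≤ |M| * (ε / (|M| + 1)) := mul_le_mul_of_nonneg_right (le_abs_self M) (by positivity)
    _ ≤ ε := (mul_div_add_one_lt (abs_nonneg M) hε).le

/-- If `S_g : H^∞_ν → H^∞_μ` is bounded, `sup (μ/ν)|g| < ∞`, `ν` satisfies the property (U)
derivative estimate, and polynomials are dense in `H^0_ν`, then `S_g` maps `H^0_ν` into
`H^0_μ`. -/
theorem stmt19 (ν μ : ℂ → ℝ) (g : ℂ → ℂ) (M B : ℝ)
    (hν : IsWeight ν) (hμ : IsWeight μ)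
    (hνtyp : IsTypical ν) (hμtyp : IsTypical μ)
    (hνpos : ∀ z ∈ Metric.ball (0:ℂ) 1, 0 < ν z)
    (hg : DifferentiableOn ℂ g (Metric.ball (0:ℂ) 1))
    -- boundedness of S_g : H^∞_ν → H^∞_μ with bound M
    (hbdd : ∀ f : ℂ → ℂ, DifferentiableOn ℂ f (Metric.ball (0:ℂ) 1) →
      ∀ C : ℝ, (∀ z ∈ Metric.ball (0:ℂ) 1, ν z * ‖f z‖ ≤ C) →
      ∀ z ∈ Metric.ball (0:ℂ) 1, μ z * ‖Sg g f z‖ ≤ M * C)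
    -- sup (μ/ν)|g| ≤ B
    (hgB : ∀ z ∈ Metric.ball (0:ℂ) 1, μ z / ν z * ‖g z‖ ≤ B)
    -- property (U) derivative estimate for ν
    (hU : ∃ Cν : ℝ, 0 < Cν ∧ ∀ f : ℂ → ℂ, DifferentiableOn ℂ f (Metric.ball (0:ℂ) 1) →
      ∀ C : ℝ, (∀ z ∈ Metric.ball (0:ℂ) 1, ν z * ‖f z‖ ≤ C) →
      ∀ z ∈ Metric.ball (0:ℂ) 1,
        ‖deriv f z‖ ≤ Cν * C / (ν z * (1 - ‖z‖ ^ 2)))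
    -- density of polynomials in H^0_ν
    (hdense : ∀ f : ℂ → ℂ, DifferentiableOn ℂ f (Metric.ball (0:ℂ) 1) →
      VanishesAtBoundary ν f → ∀ ε > (0:ℝ), ∃ p : Polynomial ℂ,
        ∀ z ∈ Metric.ball (0:ℂ) 1, ν z * ‖f z - p.eval z‖ ≤ ε) :
    ∀ f : ℂ → ℂ, DifferentiableOn ℂ f (Metric.ball (0:ℂ) 1) →
      VanishesAtBoundary ν f → VanishesAtBoundary μ (Sg g f) :=
  stmt19_general ν μ g M B hμ hνtyp hμtyp hνpos hg hbdd hgB hdense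
end
end
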